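/- For d > 1, the generating polynomial s(d, 2n+1) for irreducible Euclidean billiard partitions with d parts and largest (odd) part 2n+1 satisfies s(d, 2n+1) = q^{2n+1} · s(d-1, 2n). -/

import Mathlib

/-- A Euclidean billiard partition: a strictly decreasing list of positive
integers, whose smallest (last) part is even, and in which no two adjacent
parts are both odd. -/
def EBP (L : List ℕ) : Prop :=
  L ≠ [] ∧ (∀ m ∈ L, 0 < m) ∧ L.Chain' (· > ·) ∧
    Even (L.getLastD 1) ∧ L.Chain' fun a b => ¬(Odd a ∧ Odd b)

/-- An irreducible Euclidean billiard partition: additionally the smallest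
part equals 2 and adjacent parts differ by at most 2. -/
def IrrEBP (L : List ℕ) : Prop :=
  EBP L ∧ L.getLastD 1 = 2 ∧ L.Chain' fun a b => a ≤ b + 2

/-- The number of odd parts of a list. -/
def oddCount (L : List ℕ) : ℕ := (L.filter fun m => m % 2 = 1).length

/-- The weight exponent: `d - 1 - 2s` if the largest part is even and
`d - 2s` if it is odd, where `d` is the number of parts and `s` the number
of odd parts. -/
def wt (L : List ℕ) : ℕ :=
  if L.headD 0 % 2 = 0 then L.length - 1 - 2 * oddCount L
  else L.length - 2 * oddCount L

/-- The generating polynomial `s(d, N) = Σ_π x^{wt π} q^{|π|}` over irreducible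
Euclidean billiard partitions with `d` parts and largest part `N`, where
`x = X 0` and `q = X 1`. -/
noncomputable def sPoly (d N : ℕ) : MvPolynomial (Fin 2) ℤ :=
  ∑ᶠ L ∈ {L : List ℕ | IrrEBP L ∧ L.length = d ∧ L.headD 0 = N},
    MvPolynomial.X 0 ^ wt L * MvPolynomial.X 1 ^ L.sum

/-! Removing the largest part `2n + 1` is a bijection onto the irreducible partitions with one
part fewer and largest part `2n`: the second part is even (no two adjacent parts are odd) and lies
in `[2n - 1, 2n]`, so it is `2n`. Dropping one odd part and switching the parity of the largest
part leaves the weight exponent unchanged, so only the factor `q^(2n+1)` is lost. -/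

open MvPolynomial

lemma irrEBP_cons_cons_iff {a b : ℕ} {t : List ℕ} :
    IrrEBP (a :: b :: t) ↔ IrrEBP (b :: t) ∧ b < a ∧ a ≤ b + 2 ∧ ¬(Odd a ∧ Odd b) := by
  simp only [IrrEBP, EBP, List.Chain', List.isChain_cons_cons, List.getLastD_eq_getLast?,
    List.getLast?_cons_cons, List.mem_cons, forall_eq_or_imp, ne_eq, reduceCtorEq,
    not_false_eq_true, true_and]
  grind

lemma irrEBP_odd_cons_iff {n : ℕ} {L : List ℕ} (hL : L ≠ []) :
    IrrEBP ((2 * n + 1) :: L) ↔ IrrEBP L ∧ L.headD 0 = 2 * n := by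
  obtain ⟨b, t, rfl⟩ := List.exists_cons_of_ne_nil hL
  rw [irrEBP_cons_cons_iff, List.headD_cons, Nat.odd_iff, Nat.odd_iff]
  constructor
  · rintro ⟨hirr, hlt, hle, hodd⟩
    exact ⟨hirr, by omega⟩
  · rintro ⟨hirr, rfl⟩
    exact ⟨hirr, by omega⟩

def irrEBPs (d N : ℕ) : Set (List ℕ) :=
  {L : List ℕ | IrrEBP L ∧ L.length = d ∧ L.headD 0 = N}

lemma irrEBPs_odd_eq_image {d : ℕ} (hd : 1 < d) (n : ℕ) :
    irrEBPs d (2 * n + 1) = List.cons (2 * n + 1) '' irrEBPs (d - 1) (2 * n) := by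
  ext L
  rcases L with _ | ⟨a, L⟩
  · simp [irrEBPs]
  · have hL : L.length = d - 1 → L ≠ [] := fun hlen => List.ne_nil_of_length_pos (by omega)
    simp only [irrEBPs, Set.mem_ofPred_eq, Set.mem_image, List.cons.injEq, List.length_cons,
      List.headD_cons]
    constructor
    · rintro ⟨hirr, hlen, rfl⟩
      have hlen' : L.length = d - 1 := by omega
      obtain ⟨hirr', hhead⟩ := (irrEBP_odd_cons_iff (hL hlen')).1 hirr
      exact ⟨L, ⟨hirr', hlen', hhead⟩, rfl, rfl⟩
    · rintro ⟨L, ⟨hirr, hlen, hhead⟩, rfl, rfl⟩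
      exact ⟨(irrEBP_odd_cons_iff (hL hlen)).2 ⟨hirr, hhead⟩, by omega, rfl⟩

noncomputable def ebpMonomial (L : List ℕ) : MvPolynomial (Fin 2) ℤ :=
  X 0 ^ wt L * X 1 ^ L.sum

lemma sPoly_eq_finsum (d N : ℕ) : sPoly d N = ∑ᶠ L ∈ irrEBPs d N, ebpMonomial L := rfl

lemma wt_cons_of_odd {a : ℕ} {L : List ℕ} (ha : Odd a) (hL : Even (L.headD 0)) :
    wt (a :: L) = wt L := by
  have hoc : oddCount (a :: L) = oddCount L + 1 := by
    simp [oddCount, Nat.odd_iff.mp ha]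
  rw [wt, wt, hoc, List.headD_cons, if_neg (Nat.odd_iff.mp ha ▸ one_ne_zero),
    if_pos (Nat.even_iff.mp hL), List.length_cons]
  omega

lemma ebpMonomial_cons_of_odd {a : ℕ} {L : List ℕ} (ha : Odd a) (hL : Even (L.headD 0)) :
    ebpMonomial (a :: L) = X 1 ^ a * ebpMonomial L := by
  rw [ebpMonomial, ebpMonomial, wt_cons_of_odd ha hL, List.sum_cons, pow_add]
  ring

/-- The recurrence `s(d, 2n+1) = q^{2n+1} · s(d-1, 2n)` for `d > 1`. -/
theorem sPoly_odd_rec (d n : ℕ) (hd : 1 < d) :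
    sPoly d (2 * n + 1) =
      MvPolynomial.X 1 ^ (2 * n + 1) * sPoly (d - 1) (2 * n) := by
  -- `mul_finsum_mem` needs no finiteness since `MvPolynomial (Fin 2) ℤ` has no zero divisors.
  rw [sPoly_eq_finsum, sPoly_eq_finsum, irrEBPs_odd_eq_image hd,
    finsum_mem_image List.cons_injective.injOn, mul_finsum_mem]
  refine finsum_mem_congr rfl fun L hL => ebpMonomial_cons_of_odd (odd_two_mul_add_one n) ?_
  rw [hL.2.2]
  exact even_two_mul n
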